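/- arXiv:1610.01101 — 3 statements merged into one kernel-verified Lean document; each statement's English description precedes it below -/
import Mathlib

section
/- Let (Ω, F, P) be a probability space and {F_k}_{k∈ℕ} an increasing sequence of sub-σ-algebras of F. Let ξ ∈ ℝ, and let {X_k}_{k∈ℕ} and {Y_k}_{k∈ℕ} be sequences of integrable random variables such that for every k, X_k and Y_k are F_k-measurable, X_k ≥ ξ almost surely, Y_k ≥ 0 almost surely, and E[X_{k+1} | F_k] + Y_k ≤ X_k almost surely. Then ∑_{k=0}^∞ Y_k < ∞ almost surely, and X_k converges almost surely to a random variable taking values in [ξ, ∞). -/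
open MeasureTheory Filter Topology

/-- **Supermartingale Convergence Theorem** (Robbins–Siegmund type).
If `X_k ≥ ξ`, `Y_k ≥ 0`, both are `𝓕_k`-measurable and integrable, and
`E[X_{k+1} | 𝓕_k] + Y_k ≤ X_k` a.s. for every `k`, then `∑_k Y_k < ∞` a.s. and
`X_k` converges a.s. to a random variable with values in `[ξ, ∞)`. -/
theorem smart_supermartingale_convergence
    {Ω : Type*} {mΩ : MeasurableSpace Ω} (μ : Measure Ω) [IsProbabilityMeasure μ]
    (𝓕 : ℕ → MeasurableSpace Ω) (hmono : Monotone 𝓕) (hle : ∀ k, 𝓕 k ≤ mΩ)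
    (ξ : ℝ) (X Y : ℕ → Ω → ℝ)
    (hXint : ∀ k, Integrable (X k) μ) (hYint : ∀ k, Integrable (Y k) μ)
    (hXmeas : ∀ k, StronglyMeasurable[𝓕 k] (X k))
    (hYmeas : ∀ k, StronglyMeasurable[𝓕 k] (Y k))
    (hXge : ∀ k, ∀ᵐ ω ∂μ, ξ ≤ X k ω)
    (hYge : ∀ k, ∀ᵐ ω ∂μ, 0 ≤ Y k ω)
    (hrec : ∀ k, ∀ᵐ ω ∂μ, (μ[X (k + 1) | 𝓕 k]) ω + Y k ω ≤ X k ω) :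
    ∀ᵐ ω ∂μ, (Summable fun k => Y k ω) ∧
      ∃ c : ℝ, ξ ≤ c ∧ Tendsto (fun k => X k ω) atTop (𝓝 c) := by
  classical
  set ℱ : Filtration ℕ mΩ := ⟨𝓕, hmono, hle⟩ with hℱ
  -- partial sums of Y
  set S : ℕ → Ω → ℝ := fun k ω => ∑ j ∈ Finset.range k, Y j ω with hS
  set W : ℕ → Ω → ℝ := fun k ω => X k ω + S k ω with hW
  have hSint : ∀ k, Integrable (S k) μ := fun k =>
    integrable_finset_sum _ fun j _ => hYint j
  have hWint : ∀ k, Integrable (W k) μ := fun k => (hXint k).add (hSint k)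
  have hSmeas : ∀ k, StronglyMeasurable[𝓕 k] (S k) := by
    intro k
    apply Finset.stronglyMeasurable_fun_sum
    intro j hj
    exact (hYmeas j).mono (hmono (Finset.mem_range.mp hj).le)
  have hWadp : StronglyAdapted ℱ W := fun k => (hXmeas k).add (hSmeas k)
  -- W is a supermartingale
  have hWsuper : Supermartingale W ℱ μ := by
    refine supermartingale_nat hWadp hWint fun k => ?_
    have h1 : μ[W (k + 1)|𝓕 k] =ᵐ[μ] μ[X (k + 1)|𝓕 k] + μ[S (k + 1)|𝓕 k] :=
      condExp_add (hXint (k + 1)) (hSint (k + 1)) (𝓕 k)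
    have h2 : (μ[S (k + 1)|𝓕 k]) = S (k + 1) := by
      refine condExp_of_stronglyMeasurable (hle k) ?_ (hSint (k + 1))
      apply Finset.stronglyMeasurable_fun_sum
      intro j hj
      exact (hYmeas j).mono (hmono (Nat.lt_succ_iff.mp (Finset.mem_range.mp hj)))
    filter_upwards [h1, hrec k] with ω h1ω h3ω
    have h2ω : (μ[S (k + 1)|𝓕 k]) ω = S (k + 1) ω := by rw [h2]
    have : S (k + 1) ω = S k ω + Y k ω := Finset.sum_range_succ _ _
    calc (μ[W (k + 1)|𝓕 k]) ω = (μ[X (k + 1)|𝓕 k]) ω + (μ[S (k + 1)|𝓕 k]) ω := h1ω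
      _ = (μ[X (k + 1)|𝓕 k]) ω + (S k ω + Y k ω) := by rw [h2ω, this]
      _ = ((μ[X (k + 1)|𝓕 k]) ω + Y k ω) + S k ω := by ring
      _ ≤ X k ω + S k ω := by linarith
  -- a.e. lower bound on W
  have hae : ∀ᵐ ω ∂μ, ∀ k, ξ ≤ X k ω ∧ 0 ≤ Y k ω := by
    rw [ae_all_iff]
    intro k
    filter_upwards [hXge k, hYge k] with ω h1 h2 using ⟨h1, h2⟩
  have hWge : ∀ k, ∀ᵐ ω ∂μ, ξ ≤ W k ω := by
    intro k
    filter_upwards [hae] with ω hω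
    have hSnn : 0 ≤ S k ω := Finset.sum_nonneg fun j _ => (hω j).2
    have := (hω k).1
    simp only [hW]
    linarith
  -- L¹ boundedness of W
  set R : ℝ := ∫ ω, X 0 ω ∂μ - ξ + |ξ| with hR
  have hbdd : ∀ n, eLpNorm (W n) 1 μ ≤ ENNReal.ofReal R := by
    intro n
    have hmean : ∫ ω, W n ω ∂μ ≤ ∫ ω, X 0 ω ∂μ := by
      have := hWsuper.setIntegral_le (Nat.zero_le n) (MeasurableSet.univ (α := Ω))
      simp only [Measure.restrict_univ] at this
      have hW0 : ∫ ω, W 0 ω ∂μ = ∫ ω, X 0 ω ∂μ := by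
        apply integral_congr_ae
        filter_upwards with ω
        simp [hW, hS]
      linarith
    have habs : ∫ ω, ‖W n ω‖ ∂μ ≤ R := by
      have hle1 : ∀ᵐ ω ∂μ, ‖W n ω‖ ≤ W n ω - ξ + |ξ| := by
        filter_upwards [hWge n] with ω hω
        rw [Real.norm_eq_abs]
        calc |W n ω| = |(W n ω - ξ) + ξ| := by ring_nf
          _ ≤ |W n ω - ξ| + |ξ| := abs_add_le _ _
          _ = (W n ω - ξ) + |ξ| := by rw [abs_of_nonneg (by linarith)]
      calc ∫ ω, ‖W n ω‖ ∂μ ≤ ∫ ω, (W n ω - ξ + |ξ|) ∂μ := by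
            apply integral_mono_ae (hWint n).norm ?_ hle1
            exact ((hWint n).sub (integrable_const ξ)).add (integrable_const |ξ|)
        _ = ∫ ω, W n ω ∂μ - ξ + |ξ| := by
            have i1 : Integrable (fun ω => W n ω - ξ) μ := (hWint n).sub (integrable_const ξ)
            rw [integral_add i1 (integrable_const _),
              integral_sub (hWint n) (integrable_const _)]
            simp [measure_univ]
        _ ≤ R := by rw [hR]; linarith
    calc eLpNorm (W n) 1 μ = ∫⁻ ω, ‖W n ω‖ₑ ∂μ := eLpNorm_one_eq_lintegral_enorm
      _ = ENNReal.ofReal (∫ ω, ‖W n ω‖ ∂μ) := (ofReal_integral_norm_eq_lintegral_enorm (hWint n)).symm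
      _ ≤ ENNReal.ofReal R := ENNReal.ofReal_le_ofReal habs
  -- convergence of -W, hence of W
  have hconv : ∀ᵐ ω ∂μ, ∃ c, Tendsto (fun n => W n ω) atTop (𝓝 c) := by
    have hneg : ∀ n, eLpNorm ((-W) n) 1 μ ≤ ENNReal.ofReal R := by
      intro n
      simpa [eLpNorm_neg] using hbdd n
    filter_upwards [hWsuper.neg.exists_ae_tendsto_of_bdd hneg] with ω ⟨c, hc⟩
    exact ⟨-c, by simpa using hc.neg⟩
  -- conclude
  filter_upwards [hconv, hae] with ω hωconv hωae
  obtain ⟨L, hL⟩ := hωconv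
  have hbddW : BddAbove (Set.range fun n => W n ω) := hL.bddAbove_range
  obtain ⟨C, hC⟩ := hbddW
  have hsumm : Summable fun k => Y k ω := by
    apply summable_of_sum_range_le (c := C - ξ) (fun j => (hωae j).2)
    intro n
    have h1 : W n ω ≤ C := hC ⟨n, rfl⟩
    have h2 : ξ ≤ X n ω := (hωae n).1
    have h3 : S n ω = W n ω - X n ω := by simp [hW]
    show S n ω ≤ C - ξ
    linarith
  refine ⟨hsumm, L - ∑' k, Y k ω, ?_, ?_⟩
  · have hXtend : Tendsto (fun k => X k ω) atTop (𝓝 (L - ∑' k, Y k ω)) := by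
      have hStend : Tendsto (fun k => S k ω) atTop (𝓝 (∑' k, Y k ω)) :=
        hsumm.hasSum.tendsto_sum_nat
      have := hL.sub hStend
      apply this.congr
      intro k
      simp [hW]
    exact ge_of_tendsto' hXtend fun k => (hωae k).1
  · have hStend : Tendsto (fun k => S k ω) atTop (𝓝 (∑' k, Y k ω)) :=
      hsumm.hasSum.tendsto_sum_nat
    have := hL.sub hStend
    apply this.congr
    intro k
    simp [hW]
end

section
/- Let n ≥ 1 and b ≥ 1 be integers, L > 0, B_1,…,B_n > 0, ε₀ ∈ (0,1), q' ∈ (0,1], and ρ_1,…,ρ_n ∈ [0,1) with q'(1−ρ_i) < 1 for all i. Define, for each i, β_i := √(1−ρ_i)·(1/√(q') − √(1−ρ_i)) and θ_i := 1 − √(q'(1−ρ_i)). Let γ > 0 satisfy γ ≤ 1 / ( 4L·√( (1/n)∑_{i=1}^n q'(1+ε₀)B_i² / (2b·θ_i²) ) + (L/n)∑_{i=1}^n B_i ), and set a := γ·L·√( (1/n)∑_{i=1}^n q'(1+ε₀)B_i² / (2b·θ_i²) ) and α_i := q'γ(1+ε₀) / ( 2ab·(1 − q'(1+β_i)(1−ρ_i))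 ). Then for every w ∈ ℝ^n with |w_i| ≤ B_i for all i: (1/n)∑_{i=1}^n [ q'·α_i·(w_i L)²·(1 + (1−ρ_i)/β_i) + |w_i|·L/2 ] + a/γ ≤ 1/(2γ). -/
set_option maxHeartbeats 1600000

theorem smart_key_aux (q' ε₀ γ a L bR ρi βi θi wi Bi : ℝ)
    (hq0 : 0 < q') (hq1 : q' ≤ 1) (hε0 : 0 < ε₀) (hγp : 0 < γ) (hap : 0 < a) (hL : 0 < L)
    (hbR : 0 < bR) (hρ1 : 0 ≤ ρi) (hρ2 : ρi < 1) (hqρ : q' * (1 - ρi) < 1)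
    (hβ : βi = Real.sqrt (1 - ρi) * (1 / Real.sqrt q' - Real.sqrt (1 - ρi)))
    (hθ : θi = 1 - Real.sqrt (q' * (1 - ρi)))
    (hw : |wi| ≤ Bi) :
    q' * (q' * γ * (1 + ε₀) / (2 * a * bR * (1 - q' * (1 + βi) * (1 - ρi)))) *
        (wi * L) ^ 2 * (1 + (1 - ρi) / βi)
      ≤ γ * L ^ 2 / a * (q' * (1 + ε₀) * Bi ^ 2 / (2 * bR * θi ^ 2)) := by
  set t := Real.sqrt q' with htdef
  set s := Real.sqrt (1 - ρi) with hsdef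
  have ht : 0 < t := Real.sqrt_pos.mpr hq0
  have hs : 0 < s := Real.sqrt_pos.mpr (by linarith)
  have ht2 : t ^ 2 = q' := Real.sq_sqrt hq0.le
  have hs2 : s ^ 2 = 1 - ρi := Real.sq_sqrt (by linarith)
  have hx1 : t * s < 1 := by nlinarith [mul_pos ht hs]
  have hρs : ρi = 1 - s ^ 2 := by linarith
  have hβpos : 0 < βi := by
    rw [hβ]
    have he : 1 / t - s = (1 - t * s) / t := by field_simp
    rw [he]
    exact mul_pos hs (div_pos (by linarith) ht)
  have h1ts : (0:ℝ) < 1 - t * s := by linarith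
  have hθ' : θi = 1 - t * s := by rw [hθ, Real.sqrt_mul hq0.le]
  have E1 : 1 + (1 - ρi) / βi = 1 / (1 - t * s) := by
    rw [hβ, hρs]
    have h2 : s * (1 / t - s) ≠ 0 := by rw [← hβ]; exact ne_of_gt hβpos
    field_simp
    ring_nf
    have hne : (1:ℝ) - s * t ≠ 0 := by nlinarith
    field_simp
    ring
  have E2 : 1 - q' * (1 + βi) * (1 - ρi) = (1 - t * s) * (1 + t * s * ρi) := by
    rw [hβ, hρs, ← ht2]
    field_simp
    ring
  have htsρ : 0 < 1 + t * s * ρi := by nlinarith [mul_nonneg (mul_nonneg ht.le hs.le) hρ1]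
  rw [E1, E2, hθ']
  have hw2 : wi ^ 2 ≤ Bi ^ 2 := by nlinarith [abs_nonneg wi, sq_abs wi]
  have eqL : q' * (q' * γ * (1 + ε₀) / (2 * a * bR * ((1 - t * s) * (1 + t * s * ρi)))) *
      (wi * L) ^ 2 * (1 / (1 - t * s))
      = q' ^ 2 * wi ^ 2 * (γ * (1 + ε₀) * L ^ 2 / (2 * a * bR * (1 - t * s) ^ 2)) /
        (1 + t * s * ρi) := by
    field_simp
  have eqR : γ * L ^ 2 / a * (q' * (1 + ε₀) * Bi ^ 2 / (2 * bR * (1 - t * s) ^ 2))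
      = q' * Bi ^ 2 * (γ * (1 + ε₀) * L ^ 2 / (2 * a * bR * (1 - t * s) ^ 2)) := by
    field_simp
  rw [eqL, eqR]
  have hK : 0 ≤ γ * (1 + ε₀) * L ^ 2 / (2 * a * bR * (1 - t * s) ^ 2) := by positivity
  calc q' ^ 2 * wi ^ 2 * (γ * (1 + ε₀) * L ^ 2 / (2 * a * bR * (1 - t * s) ^ 2)) /
        (1 + t * s * ρi)
      ≤ q' ^ 2 * wi ^ 2 * (γ * (1 + ε₀) * L ^ 2 / (2 * a * bR * (1 - t * s) ^ 2)) := by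
        apply div_le_self (by positivity) (by nlinarith [mul_nonneg (mul_nonneg ht.le hs.le) hρ1])
    _ ≤ q' * Bi ^ 2 * (γ * (1 + ε₀) * L ^ 2 / (2 * a * bR * (1 - t * s) ^ 2)) := by
        apply mul_le_mul_of_nonneg_right _ hK
        nlinarith [mul_le_mul_of_nonneg_left hw2 hq0.le, mul_nonneg hq0.le (sq_nonneg wi)]

/-- **The `α_i` bound** from the sublinear-rate analysis of SMART. -/
theorem smart_alpha_bound
    (n b : ℕ) (hn : 1 ≤ n) (hb : 1 ≤ b)
    (L : ℝ) (hL : 0 < L)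
    (B : Fin n → ℝ) (hB : ∀ i, 0 < B i)
    (ε₀ : ℝ) (hε₀ : ε₀ ∈ Set.Ioo (0 : ℝ) 1)
    (q' : ℝ) (hq' : q' ∈ Set.Ioc (0 : ℝ) 1)
    (ρ : Fin n → ℝ) (hρ : ∀ i, ρ i ∈ Set.Ico (0 : ℝ) 1)
    (hqρ : ∀ i, q' * (1 - ρ i) < 1)
    (β θ : Fin n → ℝ)
    (hβ : ∀ i, β i = Real.sqrt (1 - ρ i) * (1 / Real.sqrt q' - Real.sqrt (1 - ρ i)))
    (hθ : ∀ i, θ i = 1 - Real.sqrt (q' * (1 - ρ i)))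
    (γ : ℝ) (hγpos : 0 < γ)
    (hγ : γ ≤ 1 / (4 * L * Real.sqrt ((1 / (n : ℝ)) *
            ∑ i, q' * (1 + ε₀) * (B i) ^ 2 / (2 * (b : ℝ) * (θ i) ^ 2))
          + (L / (n : ℝ)) * ∑ i, B i))
    (a : ℝ)
    (ha : a = γ * L * Real.sqrt ((1 / (n : ℝ)) *
            ∑ i, q' * (1 + ε₀) * (B i) ^ 2 / (2 * (b : ℝ) * (θ i) ^ 2)))
    (α : Fin n → ℝ)
    (hα : ∀ i, α i = q' * γ * (1 + ε₀) /
            (2 * a * (b : ℝ) * (1 - q' * (1 + β i) * (1 - ρ i)))) :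
    ∀ w : Fin n → ℝ, (∀ i, |w i| ≤ B i) →
      (1 / (n : ℝ)) * ∑ i, (q' * α i * (w i * L) ^ 2 * (1 + (1 - ρ i) / β i)
          + |w i| * L / 2) + a / γ ≤ 1 / (2 * γ) := by
  intro w hw
  obtain ⟨hq0, hq1⟩ := hq'
  obtain ⟨hε0, hε1⟩ := hε₀
  have hn' : (0:ℝ) < n := by exact_mod_cast Nat.lt_of_lt_of_le Nat.zero_lt_one hn
  have hb' : (0:ℝ) < b := by exact_mod_cast Nat.lt_of_lt_of_le Nat.zero_lt_one hb
  haveI : Nonempty (Fin n) := Fin.pos_iff_nonempty.mp (by omega)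
  have hθpos : ∀ i, 0 < θ i := by
    intro i
    rw [hθ i]
    have h0 : 0 ≤ q' * (1 - ρ i) := by nlinarith [(hρ i).2]
    have h1 : Real.sqrt (q' * (1 - ρ i)) < 1 := by
      nlinarith [Real.sq_sqrt h0, Real.sqrt_nonneg (q' * (1 - ρ i)), hqρ i]
    linarith
  set S := (1 / (n : ℝ)) * ∑ i, q' * (1 + ε₀) * (B i) ^ 2 / (2 * (b : ℝ) * (θ i) ^ 2) with hS
  have hSpos : 0 < S := by
    apply mul_pos (by positivity)
    apply Finset.sum_pos _ Finset.univ_nonempty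
    intro i _
    have h1 := hθpos i
    have h2 := hB i
    positivity
  set r := Real.sqrt S with hrdef
  have hsqS : 0 < r := Real.sqrt_pos.mpr hSpos
  have hsqS2 : r ^ 2 = S := Real.sq_sqrt hSpos.le
  clear_value r
  have hapos : 0 < a := by rw [ha]; positivity
  have key : ∀ i, q' * α i * (w i * L) ^ 2 * (1 + (1 - ρ i) / β i)
      ≤ γ * L ^ 2 / a * (q' * (1 + ε₀) * (B i) ^ 2 / (2 * (b : ℝ) * (θ i) ^ 2)) := by
    intro i
    rw [hα i]
    exact smart_key_aux q' ε₀ γ a L (b:ℝ) (ρ i) (β i) (θ i) (w i) (B i)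
      hq0 hq1 hε0 hγpos hapos hL hb' (hρ i).1 (hρ i).2 (hqρ i) (hβ i) (hθ i) (hw i)
  have sum_le : ∑ i, (q' * α i * (w i * L) ^ 2 * (1 + (1 - ρ i) / β i) + |w i| * L / 2)
      ≤ ∑ i, (γ * L ^ 2 / a * (q' * (1 + ε₀) * (B i) ^ 2 / (2 * (b:ℝ) * (θ i) ^ 2)) + B i * L / 2) := by
    apply Finset.sum_le_sum
    intro i _
    have h2 : |w i| * L / 2 ≤ B i * L / 2 := by nlinarith [hw i]
    exact add_le_add (key i) h2
  have sum_split : (1 / (n:ℝ)) * ∑ i, (γ * L ^ 2 / a * (q' * (1 + ε₀) * (B i) ^ 2 / (2 * (b:ℝ) * (θ i) ^ 2)) + B i * L / 2)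
      = γ * L ^ 2 / a * S + L / (2 * n) * ∑ i, B i := by
    rw [Finset.sum_add_distrib, ← Finset.mul_sum, hS]
    have h2 : ∑ i, B i * L / 2 = (L / 2) * ∑ i, B i := by
      rw [Finset.mul_sum]; congr 1; ext i; ring
    rw [h2]
    ring
  have haγ : γ * L ^ 2 / a * S = L * r := by
    rw [ha, ← hsqS2]
    field_simp
  have haγ' : a / γ = L * r := by
    rw [ha]; field_simp
  have hBsum : 0 < ∑ i, B i := Finset.sum_pos (fun i _ => hB i) Finset.univ_nonempty
  have hD : 0 < 4 * L * r + L / (n:ℝ) * ∑ i, B i := by positivity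
  have hγD : (4 * L * r + L / (n:ℝ) * ∑ i, B i) ≤ 1 / γ := by
    have h1 : γ * (4 * L * r + L / (n:ℝ) * ∑ i, B i) ≤ 1 := by
      calc γ * (4 * L * r + L / (n:ℝ) * ∑ i, B i)
          ≤ (1 / (4 * L * r + L / (n:ℝ) * ∑ i, B i)) *
            (4 * L * r + L / (n:ℝ) * ∑ i, B i) :=
            mul_le_mul_of_nonneg_right hγ hD.le
        _ = 1 := by field_simp
    rw [le_div_iff₀ hγpos]
    linarith [mul_comm γ (4 * L * r + L / (n:ℝ) * ∑ i, B i)]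
  calc (1 / (n : ℝ)) * ∑ i, (q' * α i * (w i * L) ^ 2 * (1 + (1 - ρ i) / β i)
          + |w i| * L / 2) + a / γ
      ≤ (1 / (n:ℝ)) * ∑ i, (γ * L ^ 2 / a * (q' * (1 + ε₀) * (B i) ^ 2 / (2 * (b:ℝ) * (θ i) ^ 2)) + B i * L / 2) + a / γ := by
        have h3 := mul_le_mul_of_nonneg_left sum_le (by positivity : (0:ℝ) ≤ 1 / (n:ℝ))
        linarith
    _ = γ * L ^ 2 / a * S + L / (2 * n) * ∑ i, B i + a / γ := by rw [sum_split]
    _ = 2 * (L * r) + L / (2 * n) * ∑ i, B i := by rw [haγ, haγ']; ring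
    _ ≤ 1 / (2 * γ) := by
        have h4 : L / (2 * (n:ℝ)) * ∑ i, B i = (L / (n:ℝ) * ∑ i, B i) / 2 := by ring
        rw [h4, show 1 / (2 * γ) = (1/γ)/2 by ring]
        linarith
end

section
/- Let n ≥ 1 and b ≥ 1 be integers, L > 0, B_1,…,B_n > 0, ε₀ ∈ (0,1), q' ∈ (0,1], and ρ_1,…,ρ_n ∈ [0,1) with 0 < q'(1−ρ_i) < 1 for all i. Let δ ∈ (0,1) satisfy δ ≥ √(q'(1−ρ_i)) for all i. Define, for each i, β_i := √(1−ρ_i)·(√(δ/q') − √(1−ρ_i)), ζ_i := √δ − √(q'(1−ρ_i)), and θ_i := 1 − √(q'(1−ρ_i))/√δ. Let γ > 0 satisfy γ ≤ 1 / ( 4L·√( (1/n)∑_{i=1}^n q'(1+ε₀)B_i² / (2b·√(q'(1−ρ_i))·(1 − (q'(1−ρ_i))^{1/4})²) ) + (L/n)∑_{i=1}^n B_i ), and set a := γ·L·√( (1/n)∑_{i=1}^n q'(1+ε₀)B_i² / (2b·ζ_i²) ) and α_i := q'γ(1+ε₀) / ( 2ab·(δ − q'(1+β_i)(1−ρ_i))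 ). Then for every w ∈ ℝ^n with |w_i| ≤ B_i for all i: (1/n)∑_{i=1}^n [ q'·α_i·(L·w_i)²·(1 + (1−ρ_i)/β_i) + |w_i|·L/2 ] + a/γ ≤ 1/(2γ). -/
set_option maxHeartbeats 1000000 in
/-- **The `α_i` bound** from the linear-convergence analysis of SMART. -/
theorem smart_alpha_bound_linear
    (n b : ℕ) (hn : 1 ≤ n) (hb : 1 ≤ b)
    (L : ℝ) (hL : 0 < L)
    (B : Fin n → ℝ) (hB : ∀ i, 0 < B i)
    (ε₀ : ℝ) (hε₀ : ε₀ ∈ Set.Ioo (0 : ℝ) 1)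
    (q' : ℝ) (hq' : q' ∈ Set.Ioc (0 : ℝ) 1)
    (ρ : Fin n → ℝ) (hρ : ∀ i, ρ i ∈ Set.Ico (0 : ℝ) 1)
    (hqρ : ∀ i, 0 < q' * (1 - ρ i) ∧ q' * (1 - ρ i) < 1)
    (δ : ℝ) (hδ : δ ∈ Set.Ioo (0 : ℝ) 1)
    (hδge : ∀ i, Real.sqrt (q' * (1 - ρ i)) ≤ δ)
    (β ζ θ : Fin n → ℝ)
    (hβ : ∀ i, β i = Real.sqrt (1 - ρ i) * (Real.sqrt (δ / q') - Real.sqrt (1 - ρ i)))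
    (hζ : ∀ i, ζ i = Real.sqrt δ - Real.sqrt (q' * (1 - ρ i)))
    (hθ : ∀ i, θ i = 1 - Real.sqrt (q' * (1 - ρ i)) / Real.sqrt δ)
    (γ : ℝ) (hγpos : 0 < γ)
    (hγ : γ ≤ 1 / (4 * L * Real.sqrt ((1 / (n : ℝ)) *
            ∑ i, q' * (1 + ε₀) * (B i) ^ 2 /
              (2 * (b : ℝ) * Real.sqrt (q' * (1 - ρ i)) *
                (1 - (q' * (1 - ρ i)) ^ ((1 : ℝ) / 4)) ^ 2))
          + (L / (n : ℝ)) * ∑ i, B i))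
    (a : ℝ)
    (ha : a = γ * L * Real.sqrt ((1 / (n : ℝ)) *
            ∑ i, q' * (1 + ε₀) * (B i) ^ 2 / (2 * (b : ℝ) * (ζ i) ^ 2)))
    (α : Fin n → ℝ)
    (hα : ∀ i, α i = q' * γ * (1 + ε₀) /
            (2 * a * (b : ℝ) * (δ - q' * (1 + β i) * (1 - ρ i)))) :
    ∀ w : Fin n → ℝ, (∀ i, |w i| ≤ B i) →
      (1 / (n : ℝ)) * ∑ i, (q' * α i * (L * w i) ^ 2 * (1 + (1 - ρ i) / β i)
          + |w i| * L / 2) + a / γ ≤ 1 / (2 * γ) := by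

  intro w hw
  obtain ⟨hq0, hq1⟩ := hq'
  obtain ⟨hδ0, hδ1⟩ := hδ
  obtain ⟨hε0, hε1⟩ := hε₀
  have hn0 : (0:ℝ) < (n:ℝ) := by exact_mod_cast Nat.pos_of_ne_zero (by omega)
  have hb0 : (0:ℝ) < (b:ℝ) := by exact_mod_cast Nat.pos_of_ne_zero (by omega)
  have hne : Nonempty (Fin n) := ⟨⟨0, by omega⟩⟩
  set u := Real.sqrt δ with hu_def
  have hu0 : 0 < u := Real.sqrt_pos.mpr hδ0
  have hu2 : u ^ 2 = δ := Real.sq_sqrt hδ0.le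
  have hu1 : u < 1 := by nlinarith
  have hδu : δ < u := by nlinarith
  set r := Real.sqrt q' with hr_def
  have hr0 : 0 < r := Real.sqrt_pos.mpr hq0
  have hr2 : r ^ 2 = q' := Real.sq_sqrt hq0.le
  have hr1 : r ≤ 1 := by nlinarith
  -- zeta facts
  have hζpos : ∀ i, 0 < ζ i := by
    intro i
    have hmδ : Real.sqrt (q' * (1 - ρ i)) ≤ δ := hδge i
    rw [hζ i]
    have : Real.sqrt (q' * (1 - ρ i)) < u := lt_of_le_of_lt hmδ hδu
    linarith
  have hζsq : ∀ i, Real.sqrt (q' * (1 - ρ i)) *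
      (1 - (q' * (1 - ρ i)) ^ ((1:ℝ)/4)) ^ 2 ≤ (ζ i) ^ 2 := by
    intro i
    obtain ⟨hm0, hm1⟩ := hqρ i
    set m := q' * (1 - ρ i) with hm_def
    set p := m ^ ((1:ℝ)/4) with hp_def
    have hp0 : 0 < p := Real.rpow_pos_of_pos hm0 _
    have hp1 : p < 1 := Real.rpow_lt_one hm0.le hm1 (by norm_num)
    have hp2 : p ^ 2 = Real.sqrt m := by
      rw [hp_def, Real.sqrt_eq_rpow, ← Real.rpow_natCast (m ^ ((1:ℝ)/4)) 2,
        ← Real.rpow_mul hm0.le]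
      norm_num
    have hpu : p ≤ u := by
      have h1 : Real.sqrt (Real.sqrt m) ≤ u := by
        rw [hu_def]
        exact Real.sqrt_le_sqrt (hδge i)
      have h2 : Real.sqrt (Real.sqrt m) = p := by rw [← hp2, Real.sqrt_sq hp0.le]
      linarith
    have hζi : ζ i = u - Real.sqrt m := hζ i
    have hge : p - p ^ 2 ≤ ζ i := by rw [hζi, ← hp2]; linarith
    have h0 : 0 ≤ p - p ^ 2 := by
      have := mul_nonneg hp0.le (show (0:ℝ) ≤ 1 - p by linarith)
      linarith
    calc Real.sqrt m * (1 - p) ^ 2 = (p - p ^ 2) ^ 2 := by rw [← hp2]; ring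
      _ ≤ (ζ i) ^ 2 := pow_le_pow_left₀ h0 hge 2
  set Q := Real.sqrt ((1 / (n : ℝ)) *
      ∑ i, q' * (1 + ε₀) * (B i) ^ 2 / (2 * (b : ℝ) * (ζ i) ^ 2)) with hQ_def
  set Q' := Real.sqrt ((1 / (n : ℝ)) *
      ∑ i, q' * (1 + ε₀) * (B i) ^ 2 /
        (2 * (b : ℝ) * Real.sqrt (q' * (1 - ρ i)) *
          (1 - (q' * (1 - ρ i)) ^ ((1 : ℝ) / 4)) ^ 2)) with hQ'_def
  have hsum_pos : 0 < ∑ i, q' * (1 + ε₀) * (B i) ^ 2 / (2 * (b : ℝ) * (ζ i) ^ 2) := by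
    apply Finset.sum_pos _ Finset.univ_nonempty
    intro i _
    have h1 := hζpos i
    have h2 := hB i
    positivity
  have hQ0 : 0 < Q := Real.sqrt_pos.mpr (by positivity)
  have hQ2 : Q ^ 2 = (1 / (n : ℝ)) *
      ∑ i, q' * (1 + ε₀) * (B i) ^ 2 / (2 * (b : ℝ) * (ζ i) ^ 2) :=
    Real.sq_sqrt (by positivity)
  have ha0 : 0 < a := by rw [ha]; positivity
  -- termwise bound
  have hterm : ∀ i, q' * α i * (L * w i) ^ 2 * (1 + (1 - ρ i) / β i)
      ≤ γ * L ^ 2 / a * (q' * (1 + ε₀) * (B i) ^ 2 / (2 * (b : ℝ) * (ζ i) ^ 2)) := by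
    intro i
    obtain ⟨hρ0, hρ1⟩ := hρ i
    have hs0 : (0:ℝ) < 1 - ρ i := by linarith
    set x := Real.sqrt (1 - ρ i) with hx_def
    have hx0 : 0 < x := Real.sqrt_pos.mpr hs0
    have hx2 : x ^ 2 = 1 - ρ i := Real.sq_sqrt hs0.le
    have hx1 : x ≤ 1 := by rw [hx_def]; exact Real.sqrt_le_one.mpr (by linarith)
    have hx1' : (0:ℝ) ≤ 1 - x ^ 2 := by rw [hx2]; linarith
    have hmr : Real.sqrt (q' * (1 - ρ i)) = r * x := by
      rw [hr_def, hx_def]; exact Real.sqrt_mul hq0.le _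
    have hrxu : r * x < u := by
      have h := hδge i
      rw [hmr] at h
      linarith
    have h1 : 0 < u - r * x := by linarith
    have hζi : ζ i = u - r * x := by rw [hζ i, hmr]
    have hβi : β i = x * (u - r * x) / r := by
      rw [hβ i, Real.sqrt_div hδ0.le, ← hu_def, ← hr_def, ← hx_def]
      field_simp
    have hβ0 : 0 < β i := by rw [hβi]; positivity
    have hqs : q' * (1 + β i) * (1 - ρ i) = r ^ 2 * x ^ 2 + r * u * x ^ 3 - r ^ 2 * x ^ 4 := by
      rw [hβi, ← hr2, ← hx2]
      field_simp
      ring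
    have hD : δ - q' * (1 + β i) * (1 - ρ i) = (u - r * x) * (u + r * x - r * x ^ 3) := by
      rw [hqs, ← hu2]; ring
    have hD0 : 0 < δ - q' * (1 + β i) * (1 - ρ i) := by
      rw [hD]
      have h2 : 0 < u + r * x - r * x ^ 3 := by
        have := mul_nonneg (mul_pos hr0 hx0).le hx1'
        linarith
      exact mul_pos h1 h2
    have hfrac : 1 + (1 - ρ i) / β i = u / (u - r * x) := by
      have hne : u - r * x ≠ 0 := h1.ne'
      rw [hβi, ← hx2]
      field_simp
      have hne3 : u - x * r ≠ 0 := by rw [mul_comm]; exact hne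
      rw [eq_div_iff hne3, add_mul, div_mul_cancel₀ _ hne3]
      ring
    have hkey : q' * (1 + (1 - ρ i) / β i) * (ζ i) ^ 2 ≤ δ - q' * (1 + β i) * (1 - ρ i) := by
      rw [hfrac, hζi, hD, ← hr2]
      have e : r ^ 2 * (u / (u - r * x)) * (u - r * x) ^ 2 = r ^ 2 * u * (u - r * x) := by
        field_simp
      rw [e]
      have hr2' : (0:ℝ) ≤ 1 - r ^ 2 := by
        have := pow_le_one₀ hr0.le hr1 (n := 2)
        linarith
      have hbr : 0 ≤ u + r * x - r * x ^ 3 - r ^ 2 * u := by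
        have hp1 := mul_nonneg (mul_pos hr0 hx0).le hx1'
        have hp2 := mul_nonneg hu0.le hr2'
        linarith
      have := mul_nonneg h1.le hbr
      linarith
    have hden : 0 < 2 * a * (b:ℝ) * (δ - q' * (1 + β i) * (1 - ρ i)) := by positivity
    have hα0 : 0 ≤ α i := by
      rw [hα i]
      exact le_of_lt (div_pos (by positivity) hden)
    have hFpos : 0 ≤ 1 + (1 - ρ i) / β i := by
      rw [hfrac]; positivity
    have hζ2 : (0:ℝ) < (ζ i) ^ 2 := by have := hζpos i; positivity
    have hqF : q' * (1 + (1 - ρ i) / β i) ≤ (δ - q' * (1 + β i) * (1 - ρ i)) / (ζ i) ^ 2 := by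
      rw [le_div_iff₀ hζ2]
      exact hkey
    have hww : (w i) ^ 2 ≤ (B i) ^ 2 := by
      have e1 := sq_abs (w i)
      have e2 := mul_self_le_mul_self (abs_nonneg (w i)) (hw i)
      linarith [e1, e2]
    have hw2 : (L * w i) ^ 2 ≤ (L * B i) ^ 2 := by
      have := mul_le_mul_of_nonneg_left hww (sq_nonneg L)
      linarith [this]
    calc q' * α i * (L * w i) ^ 2 * (1 + (1 - ρ i) / β i)
        = α i * ((L * w i) ^ 2 * (q' * (1 + (1 - ρ i) / β i))) := by ring
      _ ≤ α i * ((L * B i) ^ 2 * ((δ - q' * (1 + β i) * (1 - ρ i)) / (ζ i) ^ 2)) := by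
          apply mul_le_mul_of_nonneg_left _ hα0
          exact mul_le_mul hw2 hqF (mul_nonneg hq0.le hFpos) (sq_nonneg _)
      _ = γ * L ^ 2 / a * (q' * (1 + ε₀) * (B i) ^ 2 / (2 * (b : ℝ) * (ζ i) ^ 2)) := by
          rw [hα i]
          field_simp [ha0.ne', hb0.ne', hD0.ne', (hζpos i).ne']
  have habs : ∀ i, |w i| * L / 2 ≤ B i * L / 2 := by
    intro i
    have h := mul_le_mul_of_nonneg_right (hw i) hL.le
    linarith
  have hsum : (1 / (n : ℝ)) * ∑ i, (q' * α i * (L * w i) ^ 2 * (1 + (1 - ρ i) / β i)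
        + |w i| * L / 2)
      ≤ γ * L ^ 2 / a * ((1 / (n : ℝ)) *
          ∑ i, q' * (1 + ε₀) * (B i) ^ 2 / (2 * (b : ℝ) * (ζ i) ^ 2))
        + L / 2 * ((1 / (n : ℝ)) * ∑ i, B i) := by
    have h1 : ∑ i, (q' * α i * (L * w i) ^ 2 * (1 + (1 - ρ i) / β i) + |w i| * L / 2)
        ≤ ∑ i, (γ * L ^ 2 / a * (q' * (1 + ε₀) * (B i) ^ 2 / (2 * (b : ℝ) * (ζ i) ^ 2))
            + B i * L / 2) :=
      Finset.sum_le_sum fun i _ => add_le_add (hterm i) (habs i)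
    have h2 : ∑ i, (γ * L ^ 2 / a * (q' * (1 + ε₀) * (B i) ^ 2 / (2 * (b : ℝ) * (ζ i) ^ 2))
            + B i * L / 2)
        = γ * L ^ 2 / a * (∑ i, q' * (1 + ε₀) * (B i) ^ 2 / (2 * (b : ℝ) * (ζ i) ^ 2))
          + (∑ i, B i) * L / 2 := by
      rw [Finset.sum_add_distrib, ← Finset.mul_sum, ← Finset.sum_div, ← Finset.sum_mul]
    calc (1 / (n : ℝ)) * ∑ i, (q' * α i * (L * w i) ^ 2 * (1 + (1 - ρ i) / β i)
          + |w i| * L / 2)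
        ≤ (1 / (n : ℝ)) * (γ * L ^ 2 / a *
            (∑ i, q' * (1 + ε₀) * (B i) ^ 2 / (2 * (b : ℝ) * (ζ i) ^ 2))
          + (∑ i, B i) * L / 2) := by
          apply mul_le_mul_of_nonneg_left (h1.trans_eq h2) (by positivity)
      _ = γ * L ^ 2 / a * ((1 / (n : ℝ)) *
            ∑ i, q' * (1 + ε₀) * (B i) ^ 2 / (2 * (b : ℝ) * (ζ i) ^ 2))
          + L / 2 * ((1 / (n : ℝ)) * ∑ i, B i) := by ring
  have hLQ : γ * L ^ 2 / a * ((1 / (n : ℝ)) *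
      ∑ i, q' * (1 + ε₀) * (B i) ^ 2 / (2 * (b : ℝ) * (ζ i) ^ 2)) = L * Q := by
    rw [← hQ2, ha]
    field_simp
  have haγ : a / γ = L * Q := by rw [ha]; field_simp
  have hQQ' : Q ≤ Q' := by
    apply Real.sqrt_le_sqrt
    apply mul_le_mul_of_nonneg_left _ (by positivity)
    apply Finset.sum_le_sum
    intro i _
    obtain ⟨hm0, hm1⟩ := hqρ i
    have hp1 : (q' * (1 - ρ i)) ^ ((1:ℝ)/4) < 1 := Real.rpow_lt_one hm0.le hm1 (by norm_num)
    have hs : 0 < Real.sqrt (q' * (1 - ρ i)) := Real.sqrt_pos.mpr hm0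
    have hsq : 0 < (1 - (q' * (1 - ρ i)) ^ ((1:ℝ)/4)) ^ 2 := pow_pos (by linarith) 2
    have hden : 0 < 2 * (b:ℝ) * Real.sqrt (q' * (1 - ρ i)) *
        (1 - (q' * (1 - ρ i)) ^ ((1:ℝ)/4)) ^ 2 := by positivity
    apply div_le_div_of_nonneg_left (by positivity) _ _
    · have := hζpos i; positivity
    · have h3 := mul_le_mul_of_nonneg_left (hζsq i) (show (0:ℝ) ≤ 2 * (b:ℝ) by positivity)
      linarith
  have hQ'0 : 0 ≤ Q' := by rw [hQ'_def]; exact Real.sqrt_nonneg _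
  have hBpos : 0 < ∑ i, B i := Finset.sum_pos (fun i _ => hB i) Finset.univ_nonempty
  have hγ2 : 4 * L * Q' + L / (n : ℝ) * ∑ i, B i ≤ 1 / γ := by
    have hD' : 0 < 4 * L * Q' + L / (n : ℝ) * ∑ i, B i := by positivity
    have h := (le_div_iff₀ hD').mp hγ
    rw [le_div_iff₀ hγpos]
    linarith [h]
  have hLQle : L * Q ≤ L * Q' := mul_le_mul_of_nonneg_left hQQ' hL.le
  have hid : L / 2 * ((1 / (n : ℝ)) * ∑ i, B i) = (L / (n : ℝ) * ∑ i, B i) / 2 := by ring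
  have hhalf : 1 / (2 * γ) = (1 / γ) / 2 := by ring
  linarith [hsum, hLQ, haγ, hLQle, hγ2, hid, hhalf]
end
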